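/- Let σ and w be unit vectors in ℂ^N with ⟨w,σ⟩ = ⟨σ,w⟩ = x for some real 0 < x < 1, let E > 0 be real, set θ = arccos x and η = E·sin(2θ). Let H = 2iEx·(|w⟩⟨σ| − |σ⟩⟨w|). Then for every real t, exp(−iHt)·w = (1/sin θ)·[−sin(ηt)·σ + sin(θ + ηt)·w]. -/

import Mathlib

/-!
The operator `K = |w⟩⟨σ| - |σ⟩⟨w|` maps `w` to `x w - σ` and `σ` to `w - x σ`, so
`K² w = -(sin θ)² w`. On a vector `v` with `K² v = -s² v` the exponential series of `c K` splits
into an even part `cos (c s) v` and an odd part `(sin (c s) / s) K v`. Here `-i t H = 2 E x t K`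
and `2 E x t sin θ = η t`, and the addition formula for `sin (θ + η t)` gives the stated form.
-/

open scoped InnerProductSpace

/-- The outer product |u⟩⟨v| : the rank-one operator sending φ to ⟨v,φ⟩·u
(inner product conjugate-linear in the first argument). -/
noncomputable def outer {N : ℕ} (u v : EuclideanSpace ℂ (Fin N)) :
    EuclideanSpace ℂ (Fin N) →L[ℂ] EuclideanSpace ℂ (Fin N) :=
  ContinuousLinearMap.toSpanSingleton ℂ u ∘L (innerSL ℂ v)

section Exponential

variable {E : Type*} [NormedAddCommGroup E] [NormedSpace ℂ E]

theorem ContinuousLinearMap.pow_two_mul_apply_of_apply_apply_eq_smul {A : E →L[ℂ] E} {v : E}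
    {μ : ℂ} (h : A (A v) = μ • v) (k : ℕ) : (A ^ (2 * k)) v = μ ^ k • v := by
  induction k with
  | zero => simp
  | succ k ih =>
    rw [mul_add, mul_one, pow_add, mul_apply_eq_comp, sq, mul_apply_eq_comp, h, map_smul, ih,
      smul_smul, pow_succ, mul_comm]

theorem ContinuousLinearMap.pow_two_mul_add_one_apply_of_apply_apply_eq_smul {A : E →L[ℂ] E}
    {v : E} {μ : ℂ} (h : A (A v) = μ • v) (k : ℕ) : (A ^ (2 * k + 1)) v = μ ^ k • A v := by
  rw [pow_succ', mul_apply_eq_comp, pow_two_mul_apply_of_apply_apply_eq_smul h, map_smul]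

theorem NormedSpace.hasSum_exp_apply [CompleteSpace E] (A : E →L[ℂ] E) (v : E) :
    HasSum (fun n : ℕ => (n.factorial : ℂ)⁻¹ • (A ^ n) v) (NormedSpace.exp A v) := by
  simpa using (NormedSpace.exp_series_hasSum_exp' (𝕂 := ℂ) A).mapL
    (ContinuousLinearMap.apply ℂ E v)

theorem NormedSpace.exp_smul_apply_of_apply_apply_eq_neg_sq_smul [CompleteSpace E]
    {K : E →L[ℂ] E} {v : E} {s : ℂ} (hs : s ≠ 0) (hK : K (K v) = -(s ^ 2) • v) (c : ℂ) :
    NormedSpace.exp (c • K) v = Complex.cos (c * s) • v + (Complex.sin (c * s) / s) • K v := by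
  have hA : (c • K) ((c • K) v) = (-(c * s) ^ 2) • v := by
    simp only [smul_apply, map_smul, hK, smul_smul]
    ring_nf
  have heven : HasSum (fun k : ℕ => ((2 * k).factorial : ℂ)⁻¹ • ((c • K) ^ (2 * k)) v)
      (Complex.cos (c * s) • v) := by
    convert (Complex.hasSum_cos (c * s)).smul_const v using 2 with k
    rw [ContinuousLinearMap.pow_two_mul_apply_of_apply_apply_eq_smul hA, smul_smul, neg_pow,
      ← pow_mul, div_eq_inv_mul, mul_comm]
  have hodd : HasSum
      (fun k : ℕ => ((2 * k + 1).factorial : ℂ)⁻¹ • ((c • K) ^ (2 * k + 1)) v)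
      ((Complex.sin (c * s) / s) • K v) := by
    convert ((Complex.hasSum_sin (c * s)).div_const s).smul_const (K v) using 2 with k
    rw [ContinuousLinearMap.pow_two_mul_add_one_apply_of_apply_apply_eq_smul hA,
      smul_apply, smul_smul, smul_smul, neg_pow, ← pow_mul]
    congr 1
    field_simp
    ring
  exact (NormedSpace.hasSum_exp_apply _ v).unique
    (HasSum.even_add_odd (f := fun n : ℕ => (n.factorial : ℂ)⁻¹ • ((c • K) ^ n) v) heven hodd)

end Exponential

section Outer

variable {N : ℕ} {σ w : EuclideanSpace ℂ (Fin N)} {x : ℂ}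

theorem outer_apply (u v φ : EuclideanSpace ℂ (Fin N)) : outer u v φ = ⟪v, φ⟫_ℂ • u :=
  rfl

theorem outer_sub_outer_apply_left (hw : ‖w‖ = 1) (hσw : ⟪σ, w⟫_ℂ = x) :
    (outer w σ - outer σ w) w = x • w - σ := by
  rw [sub_apply, outer_apply, outer_apply, hσw, inner_self_eq_one_of_norm_eq_one hw, one_smul]

theorem outer_sub_outer_apply_right (hσ : ‖σ‖ = 1) (hwσ : ⟪w, σ⟫_ℂ = x) :
    (outer w σ - outer σ w) σ = w - x • σ := by
  rw [sub_apply, outer_apply, outer_apply, hwσ, inner_self_eq_one_of_norm_eq_one hσ, one_smul]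

theorem outer_sub_outer_apply_apply_left (hσ : ‖σ‖ = 1) (hw : ‖w‖ = 1)
    (hwσ : ⟪w, σ⟫_ℂ = x) (hσw : ⟪σ, w⟫_ℂ = x) :
    (outer w σ - outer σ w) ((outer w σ - outer σ w) w) = (x ^ 2 - 1) • w := by
  rw [outer_sub_outer_apply_left hw hσw, map_sub, map_smul, outer_sub_outer_apply_left hw hσw,
    outer_sub_outer_apply_right hσ hwσ]
  module

end Outer

theorem stmt_6_general {N : ℕ} (σ w : EuclideanSpace ℂ (Fin N))
    (hσ : ‖σ‖ = 1) (hw : ‖w‖ = 1) (x : ℝ) (hx0 : 0 < x) (hx1 : x < 1)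
    (hwσ : ⟪w, σ⟫_ℂ = (x : ℂ)) (hσw : ⟪σ, w⟫_ℂ = (x : ℂ))
    (E : ℝ) (θ η : ℝ) (hθ : θ = Real.arccos x)
    (hη : η = E * Real.sin (2 * θ))
    (H : EuclideanSpace ℂ (Fin N) →L[ℂ] EuclideanSpace ℂ (Fin N))
    (hH : H = (2 * Complex.I * (E : ℂ) * (x : ℂ)) • (outer w σ - outer σ w))
    (t : ℝ) :
    NormedSpace.exp ((-(Complex.I * (t : ℂ))) • H) w =
      (((Real.sin θ)⁻¹ : ℝ) : ℂ) •
        ((-(Real.sin (η * t)) : ℝ) • σ + ((Real.sin (θ + η * t) : ℝ) : ℂ) • w) := by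
  set K := outer w σ - outer σ w
  have hcos : Real.cos θ = x := hθ ▸ Real.cos_arccos (by linarith) hx1.le
  have hsin : 0 < Real.sin θ := hθ ▸ Real.sin_pos_of_pos_of_lt_pi (Real.arccos_pos.2 hx1)
    (Real.arccos_lt_pi.2 (by linarith))
  have hs : (Real.sin θ : ℂ) ≠ 0 := by exact_mod_cast hsin.ne'
  have hK : K (K w) = -((Real.sin θ : ℂ) ^ 2) • w := by
    rw [outer_sub_outer_apply_apply_left hσ hw hwσ hσw, ← hcos]
    congr 1
    exact_mod_cast (by linarith [Real.cos_sq_add_sin_sq θ] : Real.cos θ ^ 2 - 1 = -Real.sin θ ^ 2)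
  have hgen : (-(Complex.I * (t : ℂ))) • H = ((2 * E * x * t : ℝ) : ℂ) • K := by
    rw [hH, smul_smul]
    congr 1
    push_cast
    linear_combination (-2 * t * E * x : ℂ) * Complex.I_sq
  have hangle : ((2 * E * x * t : ℝ) : ℂ) * Real.sin θ = ((η * t : ℝ) : ℂ) := by
    rw [hη, Real.sin_two_mul, hcos]; push_cast; ring
  rw [hgen, NormedSpace.exp_smul_apply_of_apply_apply_eq_neg_sq_smul hs hK,
    outer_sub_outer_apply_left hw hσw, hangle, ← Complex.ofReal_cos, ← Complex.ofReal_sin,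
    Real.sin_add, hcos, ← Complex.coe_smul]
  generalize Real.sin θ = s at hs ⊢
  generalize Real.cos (η * t) = a
  generalize Real.sin (η * t) = b
  match_scalars <;> field_simp

theorem stmt_6 {N : ℕ} (σ w : EuclideanSpace ℂ (Fin N))
    (hσ : ‖σ‖ = 1) (hw : ‖w‖ = 1) (x : ℝ) (hx0 : 0 < x) (hx1 : x < 1)
    (hwσ : ⟪w, σ⟫_ℂ = (x : ℂ)) (hσw : ⟪σ, w⟫_ℂ = (x : ℂ))
    (E : ℝ) (hE : 0 < E) (θ η : ℝ) (hθ : θ = Real.arccos x)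
    (hη : η = E * Real.sin (2 * θ))
    (H : EuclideanSpace ℂ (Fin N) →L[ℂ] EuclideanSpace ℂ (Fin N))
    (hH : H = (2 * Complex.I * (E : ℂ) * (x : ℂ)) • (outer w σ - outer σ w))
    (t : ℝ) :
    NormedSpace.exp ((-(Complex.I * (t : ℂ))) • H) w =
      (((Real.sin θ)⁻¹ : ℝ) : ℂ) •
        ((-(Real.sin (η * t)) : ℝ) • σ + ((Real.sin (θ + η * t) : ℝ) : ℂ) • w) :=
  stmt_6_general σ w hσ hw x hx0 hx1 hwσ hσw E θ η hθ hη H hH t
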